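/- For every integer k ≥ 1, the alternating orientation of the path P_{4k+1}, in which every even-indexed vertex v_{2i} has its two incident edges oriented outward (arcs v_{2i} → v_{2i−1} and v_{2i} → v_{2i+1}), satisfies χ_d = k+2; in particular this orientation attains the minimum dominator chromatic number over all orientations of P_{4k+1}. -/

import Mathlib

/-- A vertex `v` dominates the color class of color `a` under coloring `c`:
the class is nonempty and every vertex of that color is an out-neighbor of `v`. -/
def Dominates {V α : Type*} (A : V → V → Prop) (c : V → α) (v : V) (a : α) : Prop :=
  (∃ w, c w = a) ∧ ∀ w, c w = a → A v w

/-- A dominator coloring of the digraph with arc relation `A`: a proper coloring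
such that every vertex with positive out-degree dominates some color class. -/
def IsDominatorColoring {V α : Type*} (A : V → V → Prop) (c : V → α) : Prop :=
  (∀ u v, A u v → c u ≠ c v) ∧ ∀ v, (∃ w, A v w) → ∃ a, Dominates A c v a

/-- The dominator chromatic number: the least `k` admitting a dominator coloring
with colors in `Fin k`. -/
noncomputable def domChrom {V : Type*} (A : V → V → Prop) : ℕ :=
  sInf {k | ∃ c : V → Fin k, IsDominatorColoring A c}

/-- The arc relation of the orientation of the path `P_n` (vertices `0,…,n-1`)
determined by `o`: the edge between `i` and `i+1` is directed `i → i+1`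
when `o i = true` and `i+1 → i` when `o i = false`. -/
def pathArc (n : ℕ) (o : ℕ → Bool) (u v : Fin n) : Prop :=
  ((u : ℕ) + 1 = (v : ℕ) ∧ o u = true) ∨ ((v : ℕ) + 1 = (u : ℕ) ∧ o v = false)

/-- The minimum of the dominator chromatic number over all orientations of `P_n`. -/
noncomputable def minDomChromPath (n : ℕ) : ℕ :=
  sInf {m | ∃ o : ℕ → Bool, m = domChrom (pathArc n o)}

/-!
Lower bound, valid for every orientation of `P_{4k+1}`: call a color dominated if some vertex
dominates its class. All dominators of a class are adjacent to all of its vertices, and a path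
contains no `K_{2,2}` and no vertex of degree `3`, so a dominated color accounts for at most three
vertices counted as dominators plus class members. At least `2k` vertices have an out-neighbour,
so there are `t ≥ k` dominated colors covering at most `3t - 2k` vertices. The remaining
`6k + 1 - 3t` vertices need further colors: one if `t = k + 1`, and two if `t = k`, since one
color class of a path on `4k + 1` vertices has at most `2k + 1` vertices.
Upper bound: an explicit coloring with `k + 2` colors of the alternating orientation.
-/

open Finset

section Dominator

variable {V α : Type*} (A : V → V → Prop) (c : V → α)

theorem isDominatorColoring_id (hA : ∀ v, ¬ A v v) : IsDominatorColoring A id := by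
  refine ⟨fun u v huv (h : u = v) => hA v (h ▸ huv), ?_⟩
  rintro v ⟨w, hw⟩
  exact ⟨w, ⟨w, rfl⟩, fun x (hx : x = w) => hx ▸ hw⟩

theorem domChrom_le {m : ℕ} {c : V → Fin m} (hc : IsDominatorColoring A c) : domChrom A ≤ m :=
  Nat.sInf_le ⟨c, hc⟩

theorem le_domChrom {n k : ℕ} {A : Fin n → Fin n → Prop} (hA : ∀ v, ¬ A v v)
    (h : ∀ m (c : Fin n → Fin m), IsDominatorColoring A c → k ≤ m) : k ≤ domChrom A :=
  le_csInf ⟨n, id, isDominatorColoring_id A hA⟩ fun m ⟨c, hc⟩ => h m c hc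

variable [Fintype V]

open Classical in
noncomputable def nonSinks : Finset V := {v | ∃ w, A v w}

open Classical in
noncomputable def dominatorsOf (a : α) : Finset V := {v | Dominates A c v a}

noncomputable def colorClass [DecidableEq α] (a : α) : Finset V := {v | c v = a}

variable [Fintype α] [DecidableEq α]

open Classical in
noncomputable def dominatedColors : Finset α := {a | ∃ v, Dominates A c v a}

theorem card_dominatedColors_le :
    #(dominatedColors A c) ≤ #({v | c v ∈ dominatedColors A c} : Finset V) := by
  classical
  refine card_le_card_of_surjOn c ?_
  intro a ha
  obtain ⟨v, ⟨w, hw⟩, -⟩ := (mem_filter.1 ha).2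
  exact ⟨w, by simpa [hw] using ha, hw⟩

theorem card_nonSinks_add_card_le {b : ℕ} (hc : IsDominatorColoring A c)
    (hb : ∀ a ∈ dominatedColors A c, #(dominatorsOf A c a) + #(colorClass c a) ≤ b) :
    #(nonSinks A) + #({v | c v ∈ dominatedColors A c} : Finset V) ≤
      b * #(dominatedColors A c) := by
  classical
  have hsub : nonSinks A ⊆ (dominatedColors A c).biUnion (dominatorsOf A c) := by
    intro v hv
    obtain ⟨a, ha⟩ := hc.2 v (mem_filter.1 hv).2
    simp only [mem_biUnion, dominatedColors, dominatorsOf, mem_filter, mem_univ, true_and]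
    exact ⟨a, ⟨v, ha⟩, ha⟩
  have hclasses : #({v | c v ∈ dominatedColors A c} : Finset V) =
      ∑ a ∈ dominatedColors A c, #(colorClass c a) := by
    rw [card_eq_sum_card_fiberwise (f := c) (s := {v | c v ∈ dominatedColors A c})
      (t := dominatedColors A c) fun v hv => by simpa using hv]
    refine sum_congr rfl fun a ha => congrArg card ?_
    ext v
    simp only [colorClass, mem_filter, mem_univ, true_and, and_iff_right_iff_imp]
    exact fun hv => hv ▸ ha
  calc #(nonSinks A) + #({v | c v ∈ dominatedColors A c} : Finset V)
      ≤ ∑ a ∈ dominatedColors A c, (#(dominatorsOf A c a) + #(colorClass c a)) := by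
        rw [sum_add_distrib, hclasses]
        exact Nat.add_le_add_right ((card_le_card hsub).trans card_biUnion_le) _
    _ ≤ b * #(dominatedColors A c) := by
        simpa [mul_comm] using sum_le_sum hb

end Dominator

section Path

variable {n : ℕ} {o : ℕ → Bool}

theorem pathArc.val_succ_eq_or {u v : Fin n} (h : pathArc n o u v) :
    (u : ℕ) + 1 = v ∨ (v : ℕ) + 1 = u :=
  h.imp And.left And.left

theorem pathArc_irrefl (o : ℕ → Bool) (v : Fin n) : ¬ pathArc n o v v := fun h => by
  have := h.val_succ_eq_or
  omega

theorem pathArc_or_pathArc_of_val_succ_eq (o : ℕ → Bool) {u v : Fin n}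
    (h : (u : ℕ) + 1 = v) : pathArc n o u v ∨ pathArc n o v u := by
  cases ho : o u
  · exact Or.inr (Or.inr ⟨h, ho⟩)
  · exact Or.inl (Or.inl ⟨h, ho⟩)

theorem card_le_two_of_val_eq_or {s : Finset (Fin n)} {x y : ℕ}
    (h : ∀ a ∈ s, (a : ℕ) = x ∨ (a : ℕ) = y) : #s ≤ 2 :=
  calc #s ≤ #({x, y} : Finset ℕ) :=
        card_le_card_of_injOn Fin.val (fun a ha => by rcases h a ha with h' | h' <;> simp [h'])
          Fin.val_injective.injOn
    _ ≤ 2 := card_le_two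

theorem card_le_of_forall_val_succ_ne {s : Finset (Fin n)}
    (h : ∀ u ∈ s, ∀ v ∈ s, (u : ℕ) + 1 ≠ v) : #s ≤ (n + 1) / 2 :=
  calc #s ≤ #(range ((n + 1) / 2)) := by
        refine card_le_card_of_injOn (fun u => (u : ℕ) / 2) (fun u _ => ?_)
          fun u hu v hv huv => ?_
        · simp only [coe_range, Set.mem_Iio]
          omega
        · have h₁ := h u hu v hv
          have h₂ := h v hv u hu
          exact Fin.ext (by simp only at huv; omega)
    _ = (n + 1) / 2 := card_range _

theorem card_nonSinks_pathArc (o : ℕ → Bool) : n / 2 ≤ #(nonSinks (pathArc n o)) := by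
  have hsinks : #(nonSinks (pathArc n o))ᶜ ≤ (n + 1) / 2 := by
    refine card_le_of_forall_val_succ_ne fun u hu v hv huv => ?_
    simp only [nonSinks, mem_compl, mem_filter, mem_univ, true_and, not_exists] at hu hv
    rcases pathArc_or_pathArc_of_val_succ_eq o huv with h | h
    exacts [hu v h, hv u h]
  rw [card_compl, Fintype.card_fin] at hsinks
  omega

theorem val_succ_ne_of_pathArc_proper {α : Type*} {c : Fin n → α}
    (hc : ∀ u v, pathArc n o u v → c u ≠ c v) {u v : Fin n} (h : c u = c v) :
    (u : ℕ) + 1 ≠ v := fun huv => by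
  rcases pathArc_or_pathArc_of_val_succ_eq o huv with h' | h'
  exacts [hc _ _ h' h, hc _ _ h' h.symm]

theorem card_add_card_le_three_of_pathArc {s t : Finset (Fin n)} (hs : s.Nonempty)
    (ht : t.Nonempty) (h : ∀ u ∈ s, ∀ w ∈ t, pathArc n o u w) : #s + #t ≤ 3 := by
  obtain ⟨u, hu⟩ := hs
  obtain ⟨w, hw⟩ := ht
  have hs₂ : #s ≤ 2 := card_le_two_of_val_eq_or (x := w - 1) (y := w + 1) fun v hv => by
    have := (h v hv w hw).val_succ_eq_or
    omega
  have ht₂ : #t ≤ 2 := card_le_two_of_val_eq_or (x := u - 1) (y := u + 1) fun v hv => by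
    have := (h u hu v hv).val_succ_eq_or
    omega
  by_contra! hbig
  obtain ⟨u₁, hu₁, u₂, hu₂, hu⟩ := one_lt_card.1 (show 1 < #s by omega)
  obtain ⟨w₁, hw₁, w₂, hw₂, hw⟩ := one_lt_card.1 (show 1 < #t by omega)
  have := (h u₁ hu₁ w₁ hw₁).val_succ_eq_or
  have := (h u₁ hu₁ w₂ hw₂).val_succ_eq_or
  have := (h u₂ hu₂ w₁ hw₁).val_succ_eq_or
  have := (h u₂ hu₂ w₂ hw₂).val_succ_eq_or
  have := Fin.val_injective.ne hu
  have := Fin.val_injective.ne hw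
  omega

end Path

theorem add_two_le_of_isDominatorColoring_pathArc {k m : ℕ} (hk : 1 ≤ k) {o : ℕ → Bool}
    {c : Fin (4 * k + 1) → Fin m} (hc : IsDominatorColoring (pathArc (4 * k + 1) o) c) :
    k + 2 ≤ m := by
  set T := dominatedColors (pathArc (4 * k + 1) o) c
  set covered : Finset (Fin (4 * k + 1)) := {v | c v ∈ T}
  set U : Finset (Fin (4 * k + 1)) := {v | c v ∉ T}
  have hS : 2 * k ≤ #(nonSinks (pathArc (4 * k + 1) o)) := by
    have := card_nonSinks_pathArc (n := 4 * k + 1) o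
    omega
  have hcount : #(nonSinks (pathArc (4 * k + 1) o)) + #covered ≤ 3 * #T := by
    refine card_nonSinks_add_card_le _ c hc fun a ha => ?_
    obtain ⟨v, ⟨w, hw⟩, hdom⟩ : ∃ v, Dominates _ c v a := by
      simpa [T, dominatedColors] using ha
    refine card_add_card_le_three_of_pathArc (o := o) ⟨v, ?_⟩ ⟨w, ?_⟩ fun u hu x hx => ?_
    · simpa [dominatorsOf] using ⟨⟨w, hw⟩, hdom⟩
    · simpa [colorClass] using hw
    · simp only [dominatorsOf, colorClass, mem_filter, mem_univ, true_and] at hu hx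
      exact hu.2 x hx
  have hT : #T ≤ #covered := card_dominatedColors_le _ c
  have hU : #covered + #U = 4 * k + 1 := by
    simpa using card_filter_add_card_filter_not (s := univ) fun v => c v ∈ T
  have hm : #T + #(U.image c) ≤ m := by
    have hdisj : Disjoint T (U.image c) := by
      simp only [disjoint_right, mem_image, U, mem_filter, mem_univ, true_and]
      rintro _ ⟨v, hv, rfl⟩
      exact hv
    simpa [card_union_of_disjoint hdisj] using card_le_univ (T ∪ U.image c)
  have hX₁ : 0 < #U → 1 ≤ #(U.image c) := fun hU => ((card_pos.1 hU).image c).card_pos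
  have hX₂ : #(U.image c) ≤ 1 → #U ≤ 2 * k + 1 := fun hX => by
    refine (card_le_of_forall_val_succ_ne fun u hu v hv => ?_).trans (by omega)
    exact val_succ_ne_of_pathArc_proper hc.1
      (card_le_one.1 hX _ (mem_image_of_mem c hu) _ (mem_image_of_mem c hv))
  omega

theorem pathArc_alternating_iff {n : ℕ} {u v : Fin n} :
    pathArc n (fun j => j % 2 == 1) u v ↔
      (u : ℕ) % 2 = 1 ∧ ((u : ℕ) + 1 = v ∨ (v : ℕ) + 1 = u) := by
  simp only [pathArc, beq_iff_eq, beq_eq_false_iff_ne]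
  omega

/-- The sources (odd vertices) share color `0`, the multiples of `4` share color `1`, and
`4j + 2` gets a color `j + 2` of its own, dominated by both its neighbours `4j + 1` and `4j + 3`. -/
def alternatingColor (k : ℕ) (v : Fin (4 * k + 1)) : Fin (k + 2) :=
  ⟨if (v : ℕ) % 2 = 1 then 0 else if (v : ℕ) % 4 = 0 then 1 else v / 4 + 2,
    by split_ifs <;> omega⟩

theorem isDominatorColoring_alternatingColor (k : ℕ) :
    IsDominatorColoring (pathArc (4 * k + 1) (fun j => j % 2 == 1)) (alternatingColor k) := by
  refine ⟨fun u v huv h => ?_, fun v ⟨w, hw⟩ => ?_⟩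
  · rw [pathArc_alternating_iff] at huv
    have := congrArg Fin.val h
    simp only [alternatingColor] at this
    split_ifs at this <;> omega
  · rw [pathArc_alternating_iff] at hw
    refine ⟨alternatingColor k ⟨4 * (v / 4) + 2, by omega⟩, ⟨_, rfl⟩, fun x hx => ?_⟩
    rw [pathArc_alternating_iff]
    have := congrArg Fin.val hx
    simp only [alternatingColor] at this
    split_ifs at this <;> omega

theorem alternating_orientation_domChrom (k : ℕ) (hk : 1 ≤ k) :
    domChrom (pathArc (4 * k + 1) (fun j => j % 2 == 1)) = k + 2 ∧
    ∀ o : ℕ → Bool,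
      domChrom (pathArc (4 * k + 1) (fun j => j % 2 == 1)) ≤
        domChrom (pathArc (4 * k + 1) o) := by
  have hlower (o : ℕ → Bool) : k + 2 ≤ domChrom (pathArc (4 * k + 1) o) :=
    le_domChrom (pathArc_irrefl o) fun _ _ hc => add_two_le_of_isDominatorColoring_pathArc hk hc
  have heq : domChrom (pathArc (4 * k + 1) (fun j => j % 2 == 1)) = k + 2 :=
    le_antisymm (domChrom_le _ (isDominatorColoring_alternatingColor k)) (hlower _)
  exact ⟨heq, fun o => heq ▸ hlower o⟩
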